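/- For all integers k ≥ 2 and t ≥ 1, N(2,k,t) ≥ k(t+2) + min(t, ⌊k/2⌋). -/

import Mathlib

/-- Points of `ℝ^d`. -/
abbrev Pt (d : ℕ) := EuclideanSpace ℝ (Fin d)

noncomputable instance {d : ℕ} : DecidableEq (Pt d) := Classical.decEq _

/-- `Q` is a partition of the finite set `P` into `k` parts. -/
def IsPartition {d k : ℕ} (P : Finset (Pt d)) (Q : Fin k → Finset (Pt d)) : Prop :=
  (∀ i j : Fin k, i ≠ j → Disjoint (Q i) (Q j)) ∧ P = Finset.univ.biUnion Q

/-- The partition `Q` of `P` is `t`-tolerant: after removing any set `Y` of at most `t`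
points, the convex hulls of the parts still have a common point. -/
def IsTolerant {d k : ℕ} (t : ℕ) (P : Finset (Pt d)) (Q : Fin k → Finset (Pt d)) : Prop :=
  ∀ Y ⊆ P, Y.card ≤ t →
    (⋂ i : Fin k, convexHull ℝ ((Q i \ Y : Finset (Pt d)) : Set (Pt d))).Nonempty

open Real Finset
open scoped RealInnerProductSpace

/-!
The set is a regular `N`-gon, `N = k(t+2) - 1`, together with `m = min(t, ⌊k/2⌋)` points near
its centre. A chord cutting off fewer than half of the vertices separates them from all other
points, so in a `t`-tolerant partition no part `j` can avoid an arc carrying all but at most `t`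
points of another part `i`. Hence every part has at least `t + 2` points, and counting gives a part
`B` of exactly `t + 2` vertices and a part `A` of at most `t + 1` vertices, so two cyclically
consecutive vertices of `B` have no vertex of `A` between them. If they are close, the arc joining
them holds two points of `B`: removing the other `t` lets a chord cut `B` off from `A`. If they
are far apart, the arc strictly between them avoids `A` and `B` and has at least `k + m - 2`
vertices, and the points every part must keep off that arc outnumber the `N + m` available.
-/

lemma disjoint_convexHull_of_lt_of_lt {E : Type*} [AddCommGroup E] [Module ℝ E]
    (f : E →ₗ[ℝ] ℝ) (c : ℝ) {X Y : Set E} (hX : ∀ x ∈ X, f x < c) (hY : ∀ y ∈ Y, c < f y) :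
    Disjoint (convexHull ℝ X) (convexHull ℝ Y) := by
  rw [Set.disjoint_left]
  intro p hpX hpY
  have hlt : f p < c := convexHull_min hX (convex_halfSpace_lt f.isLinear c) hpX
  have hgt : c < f p := convexHull_min hY (convex_halfSpace_gt f.isLinear c) hpY
  exact hlt.not_gt hgt

lemma IsTolerant.not_separated {d k t : ℕ} {P : Finset (Pt d)} {Q : Fin k → Finset (Pt d)}
    (h : IsTolerant t P Q) {Y : Finset (Pt d)} (hYP : Y ⊆ P) (hY : #Y ≤ t) (i j : Fin k)
    (v : Pt d) (c : ℝ) (hi : ∀ p ∈ Q i \ Y, ⟪v, p⟫ < c) (hj : ∀ p ∈ Q j \ Y, c < ⟪v, p⟫) :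
    False := by
  obtain ⟨p, hp⟩ := h Y hYP hY
  rw [Set.mem_iInter] at hp
  exact (disjoint_convexHull_of_lt_of_lt (innerₛₗ ℝ v) c (X := ↑(Q i \ Y)) (Y := ↑(Q j \ Y))
    (by simpa using hi) (by simpa using hj)).ne_of_mem (hp i) (hp j) rfl

lemma cos_lt_cos_of_abs_lt {x y : ℝ} (h : |x| < y) (hy : y ≤ π) : cos y < cos x := by
  rw [← cos_abs x]
  exact cos_lt_cos_of_nonneg_of_le_pi (abs_nonneg x) hy h

lemma cos_lt_cos_of_lt_of_lt_two_pi_sub {x y : ℝ} (hy : 0 ≤ y) (hyx : y < x)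
    (hx : x < 2 * π - y) : cos x < cos y := by
  rcases le_or_gt x π with h | h
  · exact cos_lt_cos_of_nonneg_of_le_pi hy h hyx
  · rw [← cos_two_pi_sub x]
    exact cos_lt_cos_of_nonneg_of_le_pi hy (by linarith) (by linarith)

section Trigonometry

variable {N : ℕ}

lemma cos_half_arc_lt_cos_offset {s ℓ : ℕ} (hs : s < ℓ) (hℓ : ℓ ≤ N) :
    cos (ℓ * π / N) < cos ((2 * s + 1 - ℓ) * π / N) := by
  have hN : (0 : ℝ) < N := by exact_mod_cast (hs.trans_le hℓ).pos
  have hs' : (s : ℝ) + 1 ≤ ℓ := by exact_mod_cast hs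
  apply cos_lt_cos_of_abs_lt
  · rw [abs_div, abs_mul, abs_of_pos pi_pos, abs_of_pos hN, div_lt_div_iff_of_pos_right hN]
    gcongr
    rw [abs_lt]
    constructor <;> linarith
  · rw [div_le_iff₀ hN, mul_comm]
    gcongr

lemma cos_offset_lt_cos_half_arc {s ℓ : ℕ} (hs : ℓ ≤ s) (hsN : s < N) :
    cos ((2 * s + 1 - ℓ) * π / N) < cos (ℓ * π / N) := by
  have hN : (0 : ℝ) < N := by exact_mod_cast (hs.trans_lt hsN).pos
  have hs' : (ℓ : ℝ) ≤ s := by exact_mod_cast hs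
  have hsN' : (s : ℝ) + 1 ≤ N := by exact_mod_cast hsN
  apply cos_lt_cos_of_lt_of_lt_two_pi_sub (by positivity)
  · gcongr
    linarith
  · rw [show 2 * π - ℓ * π / N = (2 * N - ℓ) * π / N by field_simp]
    gcongr
    linarith

lemma sin_pi_div_two_mul_le_cos_half_arc {ℓ : ℕ} (hℓ : 2 * ℓ + 1 ≤ N) :
    sin (π / (2 * N)) ≤ cos (ℓ * π / N) := by
  have hN : (0 : ℝ) < N := by exact_mod_cast (show 0 < N by omega)
  have hℓ' : 2 * (ℓ : ℝ) + 1 ≤ N := by exact_mod_cast hℓ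
  rw [← sin_pi_div_two_sub]
  apply sin_le_sin_of_le_of_le_pi_div_two
  · have : 0 ≤ π / (2 * N) := by positivity
    linarith [pi_pos]
  · have : 0 ≤ ℓ * π / N := by positivity
    linarith
  · rw [le_sub_iff_add_le]
    calc π / (2 * N) + ℓ * π / N = (2 * ℓ + 1) * π / (2 * N) := by field_simp; ring
      _ ≤ N * π / (2 * N) := by gcongr
      _ = π / 2 := by field_simp

end Trigonometry

noncomputable def unitVec (θ : ℝ) : Pt 2 := !₂[cos θ, sin θ]

lemma inner_unitVec_unitVec (ψ θ : ℝ) : ⟪unitVec ψ, unitVec θ⟫ = cos (θ - ψ) := by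
  simp [unitVec, PiLp.inner_apply, Fin.sum_univ_two, cos_sub]

lemma inner_unitVec_le_abs (ψ b : ℝ) : ⟪unitVec ψ, !₂[b, 0]⟫ ≤ |b| := by
  calc ⟪unitVec ψ, !₂[b, 0]⟫ = b * cos ψ := by simp [unitVec, PiLp.inner_apply]
    _ ≤ |b * cos ψ| := le_abs_self _
    _ = |b| * |cos ψ| := abs_mul b (cos ψ)
    _ ≤ |b| := mul_le_of_le_one_right (abs_nonneg b) (abs_cos_le_one ψ)

section Polygon

variable {N : ℕ}

def arc (a : ZMod N) (ℓ : ℕ) : Finset (ZMod N) := (range ℓ).image fun r : ℕ => a + r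

lemma mem_arc {a x : ZMod N} {ℓ : ℕ} : x ∈ arc a ℓ ↔ ∃ r < ℓ, a + r = x := by
  simp [arc]

lemma val_sub_lt_of_mem_arc {a x : ZMod N} {ℓ : ℕ} (hx : x ∈ arc a ℓ) (hℓ : ℓ ≤ N) :
    (x - a).val < ℓ := by
  obtain ⟨r, hr, rfl⟩ := mem_arc.1 hx
  rw [add_sub_cancel_left, ZMod.val_natCast, Nat.mod_eq_of_lt (hr.trans_le hℓ)]
  exact hr

@[simp] lemma arc_zero (a : ZMod N) : arc a 0 = ∅ := by simp [arc]

@[simp] lemma arc_one (a : ZMod N) : arc a 1 = {a} := by simp [arc]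

lemma card_arc (a : ZMod N) {ℓ : ℕ} (hℓ : ℓ ≤ N) : #(arc a ℓ) = ℓ := by
  rw [arc, card_image_of_injOn, card_range]
  intro r hr s hs h
  simpa [Nat.mod_eq_of_lt ((mem_range.1 hr).trans_le hℓ),
    Nat.mod_eq_of_lt ((mem_range.1 hs).trans_le hℓ)] using congrArg ZMod.val (add_left_cancel h)

variable [NeZero N]

lemma le_val_sub_of_not_mem_arc {a x : ZMod N} {ℓ : ℕ} (hx : x ∉ arc a ℓ) : ℓ ≤ (x - a).val := by
  by_contra! h
  exact hx (mem_arc.2 ⟨_, h, by rw [ZMod.natCast_zmod_val, add_sub_cancel]⟩)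

variable (N) in
noncomputable def polygonVertex (x : ZMod N) : Pt 2 := unitVec (2 * π * x.val / N)

/-- The direction of the midpoint of `arc a ℓ` on the regular `N`-gon, i.e. the outer normal of
the chord cutting that arc off. -/
noncomputable def arcNormal (a : ZMod N) (ℓ : ℕ) : Pt 2 := unitVec ((2 * a.val + ℓ - 1) * π / N)

lemma inner_arcNormal_polygonVertex (a x : ZMod N) (ℓ : ℕ) :
    ⟪arcNormal a ℓ, polygonVertex N x⟫ = cos ((2 * (x - a).val + 1 - ℓ) * π / N) := by
  have hN : (N : ℝ) ≠ 0 := Nat.cast_ne_zero.2 (NeZero.ne N)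
  set q := (a.val + (x - a).val) / N
  have hval : a.val + (x - a).val = x.val + N * q := by
    rw [← Nat.mod_add_div (a.val + (x - a).val) N, ← ZMod.val_add, add_sub_cancel]
  have hval' : (a.val : ℝ) + (x - a).val = x.val + N * q := by exact_mod_cast hval
  rw [arcNormal, polygonVertex, inner_unitVec_unitVec, ← cos_add_nat_mul_two_pi _ q]
  congr 1
  field_simp
  linear_combination (-2) * hval'

lemma lt_inner_arcNormal_of_mem_arc {a x : ZMod N} {ℓ : ℕ} (hx : x ∈ arc a ℓ) (hℓ : ℓ ≤ N) :
    cos (ℓ * π / N) < ⟪arcNormal a ℓ, polygonVertex N x⟫ := by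
  rw [inner_arcNormal_polygonVertex]
  exact cos_half_arc_lt_cos_offset (val_sub_lt_of_mem_arc hx hℓ) hℓ

lemma inner_arcNormal_lt_of_not_mem_arc {a x : ZMod N} {ℓ : ℕ} (hx : x ∉ arc a ℓ) :
    ⟪arcNormal a ℓ, polygonVertex N x⟫ < cos (ℓ * π / N) := by
  rw [inner_arcNormal_polygonVertex]
  exact cos_offset_lt_cos_half_arc (le_val_sub_of_not_mem_arc hx) (ZMod.val_lt _)

lemma sin_pi_div_two_mul_pos : 0 < sin (π / (2 * N)) := by
  have hN : (1 : ℝ) ≤ N := by exact_mod_cast NeZero.one_le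
  exact sin_pos_of_pos_of_lt_pi (by positivity)
    (by rw [div_lt_iff₀ (by positivity)]; nlinarith [pi_pos])

variable (N) in
/-- Points within distance `sin (π / (2 * N))` of the centre, which every chord cutting off fewer
than half of the vertices of the regular `N`-gon leaves on the centre's side. -/
noncomputable def innerPoint (m l : ℕ) : Pt 2 := !₂[sin (π / (2 * N)) * l / (m + 1), 0]

lemma inner_arcNormal_innerPoint_lt (a : ZMod N) {ℓ m l : ℕ} (hℓ : 2 * ℓ + 1 ≤ N) (hl : l < m) :
    ⟪arcNormal a ℓ, innerPoint N m l⟫ < cos (ℓ * π / N) := by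
  have hr := sin_pi_div_two_mul_pos (N := N)
  have hl' : (l : ℝ) / (m + 1) < 1 := by
    rw [div_lt_one (by positivity)]
    exact_mod_cast hl.trans m.lt_succ_self
  refine (inner_unitVec_le_abs _ _).trans_lt
    (lt_of_lt_of_le ?_ (sin_pi_div_two_mul_le_cos_half_arc hℓ))
  rw [mul_div_assoc, abs_of_nonneg (by positivity)]
  exact mul_lt_of_lt_one_right hr hl'

variable (N) in
noncomputable def polygonConfig (m : ℕ) : Finset (Pt 2) :=
  univ.image (polygonVertex N) ∪ (range m).image (innerPoint N m)

lemma polygonVertex_injective (hN : 3 ≤ N) : Function.Injective (polygonVertex N) := by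
  intro x y h
  by_contra hxy
  have hx := lt_inner_arcNormal_of_mem_arc (a := x) (x := x) (ℓ := 1) (by simp) (by omega)
  have hy := inner_arcNormal_lt_of_not_mem_arc (a := x) (ℓ := 1) (x := y)
    (by simpa using Ne.symm hxy)
  rw [h] at hx
  exact hx.not_gt hy

lemma polygonVertex_ne_innerPoint (hN : 3 ≤ N) (x : ZMod N) {m l : ℕ} (hl : l < m) :
    polygonVertex N x ≠ innerPoint N m l := by
  intro h
  have hx := lt_inner_arcNormal_of_mem_arc (a := x) (x := x) (ℓ := 1) (by simp) (by omega)
  rw [h] at hx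
  exact hx.not_gt (inner_arcNormal_innerPoint_lt x (by omega) hl)

lemma innerPoint_injective (m : ℕ) : Function.Injective (innerPoint N m) := by
  intro l l' h
  have h0 := congrArg (· 0) h
  simpa [innerPoint, sin_pi_div_two_mul_pos.ne', Nat.cast_add_one_ne_zero] using h0

lemma card_polygonConfig (hN : 3 ≤ N) (m : ℕ) : #(polygonConfig N m) = N + m := by
  rw [polygonConfig, card_union_of_disjoint, card_image_of_injective _ (polygonVertex_injective hN),
    card_image_of_injective _ (innerPoint_injective m), card_univ, ZMod.card, card_range]
  simp only [disjoint_left, mem_image, mem_univ, true_and, mem_range, not_exists, not_and]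
  rintro _ ⟨x, rfl⟩ l hl
  exact (polygonVertex_ne_innerPoint hN x hl).symm

end Polygon

section Coloring

variable {N : ℕ} [NeZero N]

lemma exists_pair_of_card_lt {A B : Finset (ZMod N)} (hAB : Disjoint A B) (hA : A.Nonempty)
    (hcard : #A < #B) : ∃ b ∈ B, ∃ g, 0 < g ∧ g < N ∧ b + g ∈ B ∧ ∀ r ≤ g, b + r ∉ A := by
  obtain ⟨a, ha⟩ := hA
  have hex (b : ZMod N) : ∃ r : ℕ, b + r ∈ A := ⟨(a - b).val, by simpa using ha⟩
  -- two points of `B` share the first point of `A` that follows them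
  let δ b := Nat.find (hex b)
  have hδA (b : ZMod N) : b + δ b ∈ A := Nat.find_spec (hex b)
  have hδN (b : ZMod N) : δ b < N :=
    (Nat.find_min' (hex b) (by simpa using ha)).trans_lt (ZMod.val_lt (a - b))
  obtain ⟨b₁, hb₁, b₂, hb₂, hne, heq⟩ :=
    exists_ne_map_eq_of_card_lt_of_maps_to hcard (f := fun b => b + δ b) fun b _ => hδA b
  wlog hlt : δ b₂ < δ b₁ generalizing b₁ b₂
  · have hδne : δ b₁ ≠ δ b₂ := fun h => hne (by simpa [h] using heq)
    exact this b₂ hb₂ b₁ hb₁ hne.symm heq.symm (lt_of_le_of_ne (not_lt.1 hlt) hδne)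
  have hδ₂ : 0 < δ b₂ := Nat.pos_of_ne_zero fun h =>
    disjoint_left.1 hAB (by simpa [h] using hδA b₂) hb₂
  refine ⟨b₁, hb₁, δ b₁ - δ b₂, by omega, by have := hδN b₁; omega, ?_,
    fun r hr => Nat.find_min (hex b₁) (show r < δ b₁ by omega)⟩
  convert hb₂ using 1
  rw [Nat.cast_sub hlt.le]
  linear_combination heq

lemma exists_gap_of_card_lt {A B : Finset (ZMod N)} (hAB : Disjoint A B) (hA : A.Nonempty)
    (hcard : #A < #B) : ∃ u ∈ B, ∃ g, 0 < g ∧ g < N ∧ u + g ∈ B ∧ (∀ r ≤ g, u + r ∉ A) ∧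
      ∀ r, 0 < r → r < g → u + r ∉ B := by
  obtain ⟨u, hu, g₀, hg₀, hg₀N, hg₀B, hg₀A⟩ := exists_pair_of_card_lt hAB hA hcard
  have hex : ∃ g : ℕ, 0 < g ∧ u + g ∈ B := ⟨g₀, hg₀, hg₀B⟩
  have hle : Nat.find hex ≤ g₀ := Nat.find_min' hex ⟨hg₀, hg₀B⟩
  obtain ⟨hpos, hmem⟩ := Nat.find_spec hex
  exact ⟨u, hu, Nat.find hex, hpos, by omega, hmem, fun r hr => hg₀A r (by omega),
    fun r hr₀ hr hB => Nat.find_min hex hr ⟨hr₀, hB⟩⟩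

variable {k : ℕ}

def colorClass (col : ZMod N → Fin k) (i : Fin k) : Finset (ZMod N) := {x | col x = i}

@[simp] lemma mem_colorClass {col : ZMod N → Fin k} {i : Fin k} {x : ZMod N} :
    x ∈ colorClass col i ↔ col x = i := by
  simp [colorClass]

lemma sum_card_colorClass_sdiff (col : ZMod N → Fin k) (s : Finset (ZMod N)) :
    ∑ i, #(colorClass col i \ s) = N - #s := by
  rw [show N - #s = #sᶜ by rw [card_compl, ZMod.card],
    card_eq_sum_card_fiberwise (f := col) (t := univ) (by simp)]
  congr! 2 with i
  ext x
  simp [and_comm]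

/-- The combinatorial trace of `IsTolerant` on `polygonConfig`: vertex `x` lies in part `col x`
and part `i` contains `d i` inner points. A chord cutting off an arc that part `j` avoids separates
part `j` from what is left of part `i` on the arc, so the points of part `i` off the arc cannot
all be removed. -/
def ArcTolerant (col : ZMod N → Fin k) (d : Fin k → ℕ) (t : ℕ) : Prop :=
  ∀ i j, i ≠ j → ∀ a ℓ, 2 * ℓ + 1 ≤ N → (∀ x ∈ arc a ℓ, col x ≠ j) →
    t < #(colorClass col i \ arc a ℓ) + d i

variable {col : ZMod N → Fin k} {d : Fin k → ℕ} {t : ℕ}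

lemma ArcTolerant.add_two_le_card (h : ArcTolerant col d t) (hN : 3 ≤ N) (hk : 2 ≤ k) (i : Fin k)
    (hd : d i ≤ t) : t + 2 ≤ #(colorClass col i) + d i := by
  have : Nontrivial (Fin k) := Fin.nontrivial_iff_two_le.2 hk
  obtain ⟨j, hji⟩ := exists_ne i
  have h₀ := h i j hji.symm 0 0 (by omega) (by simp)
  rw [arc_zero, sdiff_empty] at h₀
  by_contra! hlt
  obtain ⟨x, hx⟩ : (colorClass col i).Nonempty := card_pos.1 (by omega)
  have h₁ := h i j hji.symm x 1 (by omega) (by simpa [mem_colorClass.1 hx] using hji.symm)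
  rw [arc_one, sdiff_singleton_eq_erase, card_erase_of_mem hx] at h₁
  omega

lemma ArcTolerant.add_le_of_arc_avoids (h : ArcTolerant col d t)
    (hbig : ∀ i, t + 2 ≤ #(colorClass col i) + d i) {A B : Fin k} (hAB : A ≠ B) {a : ZMod N}
    {ℓ : ℕ} (hℓ : 2 * ℓ + 1 ≤ N) (hA : ∀ x ∈ arc a ℓ, col x ≠ A)
    (hB : ∀ x ∈ arc a ℓ, col x ≠ B) : k * (t + 1) + 2 + ℓ ≤ N + ∑ i, d i := by
  have hoff {j : Fin k} (hj : ∀ x ∈ arc a ℓ, col x ≠ j) :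
      colorClass col j \ arc a ℓ = colorClass col j :=
    sdiff_eq_self_of_disjoint (disjoint_left.2 fun x hx hxa => hj x hxa (mem_colorClass.1 hx))
  have hle (i : Fin k) : t + 1 + ((if i = A then 1 else 0) + if i = B then 1 else 0) ≤
      #(colorClass col i \ arc a ℓ) + d i := by
    by_cases hiA : i = A
    · subst hiA
      have := hbig i
      simp only [hAB, hoff hA, if_true, if_false]
      omega
    by_cases hiB : i = B
    · subst hiB
      have := hbig i
      simp only [hiA, hoff hB, if_true, if_false]
      omega
    simpa [hiA, hiB, Nat.succ_le_iff] using h i A hiA a ℓ hℓ hA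
  have hsum := sum_le_sum fun i (_ : i ∈ univ) => hle i
  simp only [sum_add_distrib, sum_card_colorClass_sdiff, card_arc a (show ℓ ≤ N by omega),
    sum_const, card_univ, Fintype.card_fin, smul_eq_mul, sum_ite_eq', mem_univ, if_true] at hsum
  have : k * (t + 1) = k * t + k := by ring
  omega

lemma exists_sparse_and_tight_colorClass {m : ℕ} (hN : N + 1 = k * (t + 2)) (hmk : 2 * m ≤ k)
    (hd : ∑ i, d i ≤ m) (hbig : ∀ i, t + 2 ≤ #(colorClass col i) + d i) :
    ∃ A B, A ≠ B ∧ #(colorClass col A) ≤ t + 1 ∧ #(colorClass col B) = t + 2 ∧ d B = 0 := by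
  have hcard : ∑ i, #(colorClass col i) = N := by simpa using sum_card_colorClass_sdiff col ∅
  obtain ⟨B, -, hB⟩ : ∃ B ∈ univ, #(colorClass col B) + 2 * d B < t + 3 := by
    apply exists_lt_of_sum_lt
    rw [sum_add_distrib, hcard, ← mul_sum, sum_const, card_univ, Fintype.card_fin, smul_eq_mul]
    have : k * (t + 3) = k * (t + 2) + k := by ring
    omega
  obtain ⟨A, -, hA⟩ : ∃ A ∈ univ, #(colorClass col A) < t + 2 := by
    apply exists_lt_of_sum_lt
    rw [hcard, sum_const, card_univ, Fintype.card_fin, smul_eq_mul]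
    omega
  have hB' := hbig B
  exact ⟨A, B, by rintro rfl; omega, by omega, by omega, by omega⟩

theorem not_arcTolerant {m : ℕ} (hN : N + 1 = k * (t + 2)) (hk : 2 ≤ k) (hmt : m ≤ t)
    (hmk : 2 * m ≤ k) (hd : ∑ i, d i ≤ m) : ¬ ArcTolerant col d t := by
  intro h
  have hdt (i : Fin k) : d i ≤ t :=
    (single_le_sum (fun _ _ => Nat.zero_le _) (mem_univ i)).trans (hd.trans hmt)
  have hbig (i : Fin k) : t + 2 ≤ #(colorClass col i) + d i :=
    h.add_two_le_card (by nlinarith) hk i (hdt i)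
  obtain ⟨A, B, hAB, hA, hB, hB0⟩ := exists_sparse_and_tight_colorClass hN hmk hd hbig
  have hdisj : Disjoint (colorClass col A) (colorClass col B) := disjoint_left.2 fun x hxA hxB =>
    hAB ((mem_colorClass.1 hxA).symm.trans (mem_colorClass.1 hxB))
  have hA' := hbig A
  have hdA := hdt A
  obtain ⟨u, huB, g, hg, hgN, hgB, hgA, hgapB⟩ :=
    exists_gap_of_card_lt hdisj (card_pos.1 (by omega)) (by omega)
  by_cases hshort : 2 * (g + 1) + 1 ≤ N
  · have hoff := h B A hAB.symm u (g + 1) hshort fun x hx => by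
      obtain ⟨r, hr, rfl⟩ := mem_arc.1 hx
      simpa using hgA r (by omega)
    have hne : u ≠ u + g := by
      rw [Ne, left_eq_add, ZMod.natCast_eq_zero_iff]
      exact Nat.not_dvd_of_pos_of_lt hg hgN
    have hon : {u, u + g} ⊆ colorClass col B ∩ arc u (g + 1) := by
      rw [insert_subset_iff, singleton_subset_iff]
      exact ⟨mem_inter.2 ⟨huB, mem_arc.2 ⟨0, by omega, by simp⟩⟩,
        mem_inter.2 ⟨hgB, mem_arc.2 ⟨g, by omega, rfl⟩⟩⟩
    have h2 := (card_pair hne).symm.trans_le (card_le_card hon)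
    have := card_sdiff_add_card_inter (colorClass col B) (arc u (g + 1))
    omega
  · have hkt : 2 * t ≤ k * t := Nat.mul_le_mul_right t hk
    have hN' : N + 1 = k * t + 2 * k := by rw [hN]; ring
    -- fits strictly inside the gap, is short, and has at least `k + m - 2` vertices
    set ℓ := k * t / 2 + k - 2
    have havoid : ∀ x ∈ arc (u + 1) ℓ, x ∉ colorClass col A ∧ x ∉ colorClass col B := by
      intro x hx
      obtain ⟨r, hr, rfl⟩ := mem_arc.1 hx
      rw [show u + 1 + (r : ZMod N) = u + (r + 1 : ℕ) by push_cast; ring]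
      exact ⟨hgA _ (by omega), hgapB _ (by omega) (by omega)⟩
    have := h.add_le_of_arc_avoids hbig hAB (a := u + 1) (ℓ := ℓ) (by omega)
      (fun x hx => mt mem_colorClass.2 (havoid x hx).1)
      (fun x hx => mt mem_colorClass.2 (havoid x hx).2)
    have : k * (t + 1) = k * t + k := by ring
    omega

end Coloring

theorem exists_arcTolerant_of_isTolerant {N m k t : ℕ} [NeZero N] {Q : Fin k → Finset (Pt 2)}
    (hQ : IsPartition (polygonConfig N m) Q) (htol : IsTolerant t (polygonConfig N m) Q) :
    ∃ (col : ZMod N → Fin k) (d : Fin k → ℕ), ∑ i, d i ≤ m ∧ ArcTolerant col d t := by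
  obtain ⟨hdisj, hcover⟩ := hQ
  have hsub (i : Fin k) : Q i ⊆ polygonConfig N m := hcover ▸ subset_biUnion_of_mem Q (mem_univ i)
  have hpart (x : ZMod N) : ∃ i, polygonVertex N x ∈ Q i := by
    have hx : polygonVertex N x ∈ polygonConfig N m :=
      mem_union_left _ (mem_image_of_mem _ (mem_univ x))
    simpa [hcover] using hx
  choose col hcol using hpart
  have hcol_eq {x : ZMod N} {i : Fin k} (hx : polygonVertex N x ∈ Q i) : col x = i := by
    by_contra hne
    exact disjoint_left.1 (hdisj _ _ hne) (hcol x) hx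
  set D := (range m).image (innerPoint N m)
  refine ⟨col, fun i => #(Q i ∩ D), ?_, ?_⟩
  · calc ∑ i, #(Q i ∩ D) = #(univ.biUnion fun i => Q i ∩ D) :=
          (card_biUnion fun i _ j _ hij =>
            (hdisj i j hij).mono inter_subset_left inter_subset_left).symm
      _ ≤ #D := card_le_card (biUnion_subset.2 fun i _ => inter_subset_right)
      _ ≤ m := card_image_le.trans (card_range m).le
  intro i j hij a ℓ hℓ hj
  by_contra! hle
  set Y := Q i \ (arc a ℓ).image (polygonVertex N)
  have hY : Y ⊆ (colorClass col i \ arc a ℓ).image (polygonVertex N) ∪ (Q i ∩ D) := by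
    intro p hp
    obtain ⟨hpQ, hpa⟩ := mem_sdiff.1 hp
    rcases mem_union.1 (hsub i hpQ) with hpV | hpD
    · obtain ⟨x, -, rfl⟩ := mem_image.1 hpV
      refine mem_union_left _ (mem_image_of_mem _ (mem_sdiff.2 ⟨?_, ?_⟩))
      · exact mem_colorClass.2 (hcol_eq hpQ)
      · exact fun hx => hpa (mem_image_of_mem _ hx)
    · exact mem_union_right _ (mem_inter.2 ⟨hpQ, hpD⟩)
  have hYcard : #Y ≤ t :=
    calc #Y ≤ #((colorClass col i \ arc a ℓ).image (polygonVertex N)) + #(Q i ∩ D) :=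
          (card_le_card hY).trans (card_union_le _ _)
      _ ≤ #(colorClass col i \ arc a ℓ) + #(Q i ∩ D) := add_le_add card_image_le le_rfl
      _ ≤ t := hle
  refine htol.not_separated (sdiff_subset.trans (hsub i)) hYcard j i (arcNormal a ℓ)
    (cos (ℓ * π / N)) ?_ ?_
  · intro p hp
    have hpQ := (mem_sdiff.1 hp).1
    rcases mem_union.1 (hsub j hpQ) with hpV | hpD
    · obtain ⟨x, -, rfl⟩ := mem_image.1 hpV
      exact inner_arcNormal_lt_of_not_mem_arc fun hx => hj x hx (hcol_eq hpQ)
    · obtain ⟨l, hl, rfl⟩ := mem_image.1 hpD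
      exact inner_arcNormal_innerPoint_lt a hℓ (mem_range.1 hl)
  · intro p hp
    obtain ⟨hpQ, hpY⟩ := mem_sdiff.1 hp
    obtain ⟨x, hx, rfl⟩ := mem_image.1 (not_not.1 fun h => hpY (mem_sdiff.2 ⟨hpQ, h⟩))
    exact lt_inner_arcNormal_of_mem_arc hx (by omega)

theorem lower_bound_N2kt_min_general (k t : ℕ) (hk : 2 ≤ k) :
    ∃ S : Finset (Pt 2), S.card = k * (t + 2) + min t (k / 2) - 1 ∧
      ∀ Q : Fin k → Finset (Pt 2), IsPartition S Q → ¬ IsTolerant t S Q := by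
  set N := k * (t + 2) - 1
  have hN : 3 ≤ N := by
    have := Nat.mul_le_mul hk (Nat.le_add_left 2 t)
    omega
  have : NeZero N := ⟨by omega⟩
  refine ⟨polygonConfig N (min t (k / 2)), by rw [card_polygonConfig hN]; omega,
    fun Q hQ htol => ?_⟩
  obtain ⟨col, d, hd, hcol⟩ := exists_arcTolerant_of_isTolerant hQ htol
  exact not_arcTolerant (by omega) hk (min_le_left _ _) (by omega) hd hcol

/-- Parameter-free form of Theorem 2: for all `k ≥ 2` and `t ≥ 1`,
`N(2,k,t) ≥ k(t+2) + min(t, ⌊k/2⌋)`, witnessed by a planar set of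
`k(t+2) + min(t, ⌊k/2⌋) - 1` points with no `t`-tolerant partition into `k` parts. -/
theorem lower_bound_N2kt_min (k t : ℕ) (hk : 2 ≤ k) (ht : 1 ≤ t) :
    ∃ S : Finset (Pt 2), S.card = k * (t + 2) + min t (k / 2) - 1 ∧
      ∀ Q : Fin k → Finset (Pt 2), IsPartition S Q → ¬ IsTolerant t S Q :=
  lower_bound_N2kt_min_general k t hk
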